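/- Let W : ℝ² → ℝ² be continuously differentiable with compact support, let Δ ⊂ ℝ² be a bounded measurable set, let f : ℝ² → ℝ² be continuously differentiable (independent of t), and let φ : ℝ × ℝ² → ℝ² be twice continuously differentiable. Write φ = φ(0, ·) and φ̇(x) = d/dt|_{t=0} φ(t, F_t(x)). Then the map t ↦ ∫_{F_t(Δ)} − f(y) · φ(t,·)(y) dy is differentiable at t = 0 and its derivative equals ∫_Δ [ − (∇f(x) W(x)) · φ(x) − f(x) · φ̇(x) + div W(x) · ( − f(x) · φ(x) ) ] dx. -/

import Mathlib

/-!
For small `|t|` the map `F_t = id + t • W` is injective (`W` is Lipschitz) and its Jacobian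
determinant `det (I + t ∇W) = 1 + t div W + t² det ∇W` is positive, so the change of variables
formula pulls the integral back to `Δ`, with integrand `J_t(x) h(t, F_t x)` where
`h(t, y) = -f(y) · φ(t, y)`. The `t`-derivative of this integrand is jointly continuous in `(t, x)`,
hence bounded on a compact neighbourhood of `{0} × closure Δ`, and dominated convergence allows
differentiation under the integral sign. At `t = 0` we have `J_0 = 1` and `∂ₜ J_0 = div W`, and the
chain rule along `s ↦ (s, x + s W x)` produces the material derivatives.
-/

open MeasureTheory
open scoped RealInnerProductSpace

/-- Jacobian matrix of a vector field on `ℝ²`: `(jac v x) i j = ∂ v_i / ∂ x_j`. -/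
noncomputable def jac (v : EuclideanSpace ℝ (Fin 2) → EuclideanSpace ℝ (Fin 2))
    (x : EuclideanSpace ℝ (Fin 2)) : Matrix (Fin 2) (Fin 2) ℝ :=
  Matrix.of fun i j => fderiv ℝ v x (EuclideanSpace.single j (1 : ℝ)) i

/-- Divergence of a vector field: the trace of its Jacobian. -/
noncomputable def divg (v : EuclideanSpace ℝ (Fin 2) → EuclideanSpace ℝ (Fin 2))
    (x : EuclideanSpace ℝ (Fin 2)) : ℝ :=
  Matrix.trace (jac v x)

open Filter Topology

local notation "ℝ²" => EuclideanSpace ℝ (Fin 2)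

theorem Matrix.det_one_add_smul_fin_two {R : Type*} [CommRing R] (t : R)
    (M : Matrix (Fin 2) (Fin 2) R) :
    (1 + t • M).det = 1 + t * M.trace + t ^ 2 * M.det := by
  simp [Matrix.det_fin_two, Matrix.trace_fin_two]
  ring

theorem jac_eq_toMatrix (v : ℝ² → ℝ²) (x : ℝ²) :
    jac v x = LinearMap.toMatrix (EuclideanSpace.basisFun (Fin 2) ℝ).toBasis
      (EuclideanSpace.basisFun (Fin 2) ℝ).toBasis (fderiv ℝ v x) := by
  ext i j
  simp [jac, LinearMap.toMatrix_apply]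

theorem det_id_add_smul_fderiv (v : ℝ² → ℝ²) (x : ℝ²) (t : ℝ) :
    (ContinuousLinearMap.id ℝ ℝ² + t • fderiv ℝ v x).det
      = 1 + t * divg v x + t ^ 2 * (jac v x).det := by
  rw [ContinuousLinearMap.det, ContinuousLinearMap.toLinearMap_add,
    ContinuousLinearMap.toLinearMap_smul, ContinuousLinearMap.coe_id,
    ← LinearMap.det_toMatrix (EuclideanSpace.basisFun (Fin 2) ℝ).toBasis, map_add, map_smul,
    LinearMap.toMatrix_id, Matrix.det_one_add_smul_fin_two, divg, jac_eq_toMatrix,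
    LinearMap.det_toMatrix]

theorem HasCompactSupport.jac {v : ℝ² → ℝ²} (hv : HasCompactSupport v) :
    HasCompactSupport (jac v) := by
  have hjac : _root_.jac v = (fun A : ℝ² →L[ℝ] ℝ² =>
      Matrix.of fun i j => A (EuclideanSpace.single j 1) i) ∘ fderiv ℝ v := rfl
  rw [hjac]
  exact (hv.fderiv ℝ).comp_left (by ext; simp)

theorem ContDiff.continuous_jac {v : ℝ² → ℝ²} (hv : ContDiff ℝ 1 v) : Continuous (jac v) :=
  continuous_matrix fun _ _ => (EuclideanSpace.proj _).continuous.comp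
    ((hv.continuous_fderiv one_ne_zero).clm_apply continuous_const)

theorem injective_add_smul_of_lipschitzWith {E : Type*} [NormedAddCommGroup E] [NormedSpace ℝ E]
    {W : E → E} {L : NNReal} (hW : LipschitzWith L W) {t : ℝ} (ht : ‖t‖₊ * L < 1) :
    Function.Injective fun x => x + t • W x :=
  (AntilipschitzWith.id.add_lipschitzWith ((lipschitzWith_smul t).comp hW)
    (by simpa using ht)).injective

theorem setIntegral_image_add_smul {E G : Type*} [NormedAddCommGroup E] [NormedSpace ℝ E]
    [FiniteDimensional ℝ E] [MeasurableSpace E] [BorelSpace E] [NormedAddCommGroup G]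
    [NormedSpace ℝ G] (μ : Measure E) [μ.IsAddHaarMeasure] {W : E → E}
    (hW : Differentiable ℝ W) {L : NNReal} (hL : LipschitzWith L W) {t : ℝ}
    (ht : ‖t‖₊ * L < 1) {s : Set E} (hs : MeasurableSet s) (g : E → G) :
    ∫ y in (fun x => x + t • W x) '' s, g y ∂μ
      = ∫ x in s, |(ContinuousLinearMap.id ℝ E + t • fderiv ℝ W x).det| • g (x + t • W x) ∂μ :=
  integral_image_eq_integral_abs_det_fderiv_smul μ hs
    (fun x _ => ((hasFDerivAt_id x).add ((hW x).hasFDerivAt.const_smul t)).hasFDerivWithinAt)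
    (injective_add_smul_of_lipschitzWith hL ht).injOn g

theorem eventually_forall_one_add_mul_add_sq_mul_pos {α : Type*} {a b : α → ℝ} {A B : ℝ}
    (ha : ∀ x, ‖a x‖ ≤ A) (hb : ∀ x, ‖b x‖ ≤ B) :
    ∀ᶠ t in 𝓝 (0 : ℝ), ∀ x, 0 < 1 + t * a x + t ^ 2 * b x := by
  have hsmall : ∀ᶠ t in 𝓝 (0 : ℝ), |t| * A + t ^ 2 * B < 1 :=
    (show Continuous fun t : ℝ => |t| * A + t ^ 2 * B by fun_prop).continuousAt.eventually_lt
      continuousAt_const (by simp)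
  filter_upwards [hsmall] with t ht x
  have hta : |t * a x| ≤ |t| * A := by
    rw [abs_mul]; exact mul_le_mul_of_nonneg_left (ha x) (abs_nonneg t)
  have htb : |t ^ 2 * b x| ≤ t ^ 2 * B := by
    rw [abs_mul, abs_pow, sq_abs]; exact mul_le_mul_of_nonneg_left (hb x) (sq_nonneg t)
  linarith [neg_abs_le (t * a x), neg_abs_le (t ^ 2 * b x)]

theorem eventually_setIntegral_image_add_smul_eq {G : Type*} [NormedAddCommGroup G]
    [NormedSpace ℝ G] {W : ℝ² → ℝ²} (hW : ContDiff ℝ 1 W) (hWc : HasCompactSupport W)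
    {s : Set ℝ²} (hs : MeasurableSet s) :
    ∀ᶠ t in 𝓝 (0 : ℝ), ∀ g : ℝ² → G, ∫ y in (fun x => x + t • W x) '' s, g y
      = ∫ x in s, (1 + t * divg W x + t ^ 2 * (jac W x).det) • g (x + t • W x) := by
  obtain ⟨L, hL⟩ := hW.lipschitzWith_of_hasCompactSupport hWc one_ne_zero
  obtain ⟨A, hA⟩ : ∃ A, ∀ x, ‖divg W x‖ ≤ A :=
    (hWc.jac.comp_left (Matrix.trace_zero _ _)).exists_bound_of_continuous
      hW.continuous_jac.matrix_trace
  obtain ⟨B, hB⟩ : ∃ B, ∀ x, ‖(jac W x).det‖ ≤ B :=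
    (hWc.jac.comp_left Matrix.det_zero).exists_bound_of_continuous hW.continuous_jac.matrix_det
  have hsmall : ∀ᶠ t in 𝓝 (0 : ℝ), ‖t‖₊ * L < 1 :=
    (continuous_nnnorm.mul continuous_const).continuousAt.eventually_lt continuousAt_const
      (by simp)
  filter_upwards [eventually_forall_one_add_mul_add_sq_mul_pos hA hB, hsmall] with t hJ ht g
  rw [setIntegral_image_add_smul volume (hW.differentiable one_ne_zero) hL ht hs]
  refine setIntegral_congr_fun hs fun x _ => ?_
  rw [det_id_add_smul_fderiv, abs_of_pos (hJ x)]

theorem hasDerivAt_setIntegral_of_continuous_deriv {E G : Type*} [NormedAddCommGroup E]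
    [ProperSpace E] [MeasurableSpace E] [BorelSpace E] [NormedAddCommGroup G] [NormedSpace ℝ G]
    (μ : Measure E) [IsFiniteMeasureOnCompacts μ] {s : Set E} (hsm : MeasurableSet s)
    (hsb : Bornology.IsBounded s) {F F' : ℝ → E → G} (hF : ∀ t, Continuous (F t))
    (hF' : Continuous (Function.uncurry F')) (hderiv : ∀ t x, HasDerivAt (F · x) (F' t x) t)
    (t₀ : ℝ) : HasDerivAt (fun t => ∫ x in s, F t x ∂μ) (∫ x in s, F' t₀ x ∂μ) t₀ := by
  obtain ⟨C, hC⟩ := ((isCompact_closedBall t₀ 1).prod hsb.isCompact_closure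
    ).exists_bound_of_continuousOn hF'.continuousOn
  refine (hasDerivAt_integral_of_dominated_loc_of_deriv_le (bound := fun _ => C)
    (Metric.closedBall_mem_nhds t₀ one_pos) (.of_forall fun t => (hF t).aestronglyMeasurable)
    (((hF t₀).continuousOn.integrableOn_compact hsb.isCompact_closure).mono_set subset_closure)
    (hF'.uncurry_left t₀).aestronglyMeasurable ?_
    (integrableOn_const hsb.measure_lt_top.ne) (.of_forall fun x t _ => hderiv t x)).2
  exact (ae_restrict_iff' hsm).2 <| .of_forall fun x hx t ht => hC (t, x) ⟨ht, subset_closure hx⟩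

theorem hasDerivAt_one_add_mul_add_sq_mul (a b t : ℝ) :
    HasDerivAt (fun s => 1 + s * a + s ^ 2 * b) (a + 2 * t * b) t := by
  simpa [add_assoc] using
    (((hasDerivAt_id t).mul_const a).add ((hasDerivAt_pow 2 t).mul_const b)).const_add 1

theorem hasDerivAt_add_smul {E : Type*} [NormedAddCommGroup E] [NormedSpace ℝ E] (x v : E)
    (t : ℝ) : HasDerivAt (fun s : ℝ => x + s • v) v t := by
  simpa using ((hasDerivAt_id t).smul_const v).const_add x

theorem HasFDerivAt.hasDerivAt_comp_add_smul {E G : Type*} [NormedAddCommGroup E]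
    [NormedSpace ℝ E] [NormedAddCommGroup G] [NormedSpace ℝ G] {h : ℝ × E → G}
    {h' : ℝ × E →L[ℝ] G} {x v : E} {t : ℝ} (hh : HasFDerivAt h h' (t, x + t • v)) :
    HasDerivAt (fun s => h (s, x + s • v)) (h' (1, v)) t :=
  hh.comp_hasDerivAt t ((hasDerivAt_id t).prodMk (hasDerivAt_add_smul x v t))

theorem hasDerivAt_inner_comp_add_smul {E F : Type*} [NormedAddCommGroup E] [NormedSpace ℝ E]
    [NormedAddCommGroup F] [InnerProductSpace ℝ F] {f : E → F} {φ : ℝ × E → F} {x v : E}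
    {t : ℝ} (hf : DifferentiableAt ℝ f (x + t • v)) (hφ : DifferentiableAt ℝ φ (t, x + t • v)) :
    HasDerivAt (fun s => ⟪f (x + s • v), φ (s, x + s • v)⟫)
      (⟪f (x + t • v), deriv (fun s => φ (s, x + s • v)) t⟫
        + ⟪fderiv ℝ f (x + t • v) v, φ (t, x + t • v)⟫) t := by
  have hf' : HasDerivAt (fun s => f (x + s • v)) (fderiv ℝ f (x + t • v) v) t :=
    hf.hasFDerivAt.comp_hasDerivAt t (hasDerivAt_add_smul x v t)
  exact hf'.inner ℝ hφ.hasFDerivAt.hasDerivAt_comp_add_smul.differentiableAt.hasDerivAt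

theorem hasDerivAt_setIntegral_image_add_smul {G : Type*} [NormedAddCommGroup G]
    [NormedSpace ℝ G] {W : ℝ² → ℝ²} (hW : ContDiff ℝ 1 W) (hWc : HasCompactSupport W)
    {s : Set ℝ²} (hsm : MeasurableSet s) (hsb : Bornology.IsBounded s) {h : ℝ × ℝ² → G}
    (hh : ContDiff ℝ 1 h) :
    HasDerivAt (fun t => ∫ y in (fun x => x + t • W x) '' s, h (t, y))
      (∫ x in s, divg W x • h (0, x) + fderiv ℝ h (0, x) (1, W x)) 0 := by
  set J : ℝ → ℝ² → ℝ := fun t x => 1 + t * divg W x + t ^ 2 * (jac W x).det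
  have hjac_cont := hW.continuous_jac
  have hdivg_cont : Continuous (divg W) := hjac_cont.matrix_trace
  have hh'_cont := hh.continuous_fderiv one_ne_zero
  have hderiv := hasDerivAt_setIntegral_of_continuous_deriv volume hsm hsb
    (F := fun t x => J t x • h (t, x + t • W x))
    (F' := fun t x => J t x • fderiv ℝ h (t, x + t • W x) (1, W x)
      + (divg W x + 2 * t * (jac W x).det) • h (t, x + t • W x))
    (by fun_prop) (by fun_prop) (fun t x => (hasDerivAt_one_add_mul_add_sq_mul _ _ t).smul
      (hh.differentiable one_ne_zero _).hasFDerivAt.hasDerivAt_comp_add_smul) 0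
  refine (hderiv.congr_of_eventuallyEq ?_).congr_deriv ?_
  · filter_upwards [eventually_setIntegral_image_add_smul_eq (G := G) hW hWc hsm] with t ht
      using ht _
  refine setIntegral_congr_fun hsm fun x _ => ?_
  simp [J, add_comm]

/-- Shape derivative of the force term
`t ↦ ∫_{F_t(Δ)} − f · φ(t,·) dy`, where `f` is shape independent. -/
theorem shape_derivative_L5
    (W : EuclideanSpace ℝ (Fin 2) → EuclideanSpace ℝ (Fin 2))
    (hW : ContDiff ℝ 1 W) (hWc : HasCompactSupport W)
    (Δ : Set (EuclideanSpace ℝ (Fin 2))) (hΔm : MeasurableSet Δ)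
    (hΔb : Bornology.IsBounded Δ)
    (f : EuclideanSpace ℝ (Fin 2) → EuclideanSpace ℝ (Fin 2)) (hf : ContDiff ℝ 1 f)
    (φ : ℝ × EuclideanSpace ℝ (Fin 2) → EuclideanSpace ℝ (Fin 2)) (hφ : ContDiff ℝ 2 φ)
    (φ₀ φdot : EuclideanSpace ℝ (Fin 2) → EuclideanSpace ℝ (Fin 2))
    (hφ₀ : φ₀ = fun z => φ ((0 : ℝ), z))
    (hφdot : φdot = fun z => deriv (fun t : ℝ => φ (t, z + t • W z)) 0) :
    HasDerivAt
      (fun t : ℝ => ∫ y in (fun x => x + t • W x) '' Δ, -⟪f y, φ (t, y)⟫)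
      (∫ x in Δ,
        (-⟪fderiv ℝ f x (W x), φ₀ x⟫
          - ⟪f x, φdot x⟫
          + divg W x * (-⟪f x, φ₀ x⟫))) (0 : ℝ) := by
  subst hφ₀ hφdot
  have hh : ContDiff ℝ 1 fun p : ℝ × ℝ² => -⟪f p.2, φ p⟫ :=
    ((hf.comp contDiff_snd).inner ℝ (hφ.of_le one_le_two)).neg
  refine (hasDerivAt_setIntegral_image_add_smul hW hWc hΔm hΔb hh).congr_deriv
    (setIntegral_congr_fun hΔm fun x _ => ?_)
  have hmaterial := ((hh.differentiable one_ne_zero _).hasFDerivAt.hasDerivAt_comp_add_smul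
    (t := 0) (x := x) (v := W x)).unique (hasDerivAt_inner_comp_add_smul
      (hf.differentiable one_ne_zero _) (hφ.differentiable two_ne_zero _)).neg
  simp only [zero_smul, add_zero] at hmaterial ⊢
  rw [hmaterial, smul_eq_mul]
  ring
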